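/- (Edwards–Sokal correspondence, free boundary.) Let G=(V,E) be a finite graph, q ≥ 2 an integer, β > 0, and p := 1 − exp(−qβ/(q−1)) (equivalently β = −((q−1)/q) log(1−p)). Then for all x, y ∈ V, ⟨σ_x·σ_y⟩_{G,β,q} = φ⁰_{G,p,q}[x ↔ y], the probability under the free random-cluster measure that x and y lie in the same connected component of (V,ω). -/

import Mathlib

open scoped BigOperators Real InnerProductSpace
open Filter MeasureTheory

noncomputable section

/-- The graph on an additive group in which `x ~ y` iff `x - y` is a (plus or minus) step. -/
def stepGraph {V : Type*} [AddCommGroup V] (S : Set V) : SimpleGraph V where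
  Adj x y := x ≠ y ∧ (x - y ∈ S ∨ y - x ∈ S)
  symm := by
    constructor
    intro x y h
    exact ⟨h.1.symm, h.2.symm⟩
  loopless := by
    constructor
    intro x h
    exact h.1 rfl

/-- The nearest-neighbour graph on `ℤ^d`. -/
def zGraph (d : ℕ) : SimpleGraph (Fin d → ℤ) :=
  stepGraph (Set.range fun i : Fin d => Pi.single i (1 : ℤ))

/-- Vertex set of the slab `ℤ^r × (ℤ/2nℤ)^s`. -/
abbrev SlabV (r s n : ℕ) := (Fin r → ℤ) × (Fin s → ZMod (2 * n))

/-- The nearest-neighbour graph on `ℤ^r × (ℤ/2nℤ)^s`. -/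
def slabGraph (r s n : ℕ) : SimpleGraph (SlabV r s n) :=
  stepGraph ((Set.range fun i : Fin r => (Pi.single i (1 : ℤ), 0)) ∪
    (Set.range fun j : Fin s => (0, Pi.single j (1 : ZMod (2 * n)))))

/-- Vertex set of the torus `(ℤ/2Nℤ)^r × (ℤ/2nℤ)^s`. -/
abbrev TorusV (r s N n : ℕ) := (Fin r → ZMod (2 * N)) × (Fin s → ZMod (2 * n))

/-- The nearest-neighbour graph on the torus `(ℤ/2Nℤ)^r × (ℤ/2nℤ)^s`. -/
def torusGraph (r s N n : ℕ) : SimpleGraph (TorusV r s N n) :=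
  stepGraph ((Set.range fun i : Fin r => (Pi.single i (1 : ZMod (2 * N)), 0)) ∪
    (Set.range fun j : Fin s => (0, Pi.single j (1 : ZMod (2 * n)))))

/-- Ball of radius `R` around `o` for the graph distance. -/
def gball {V : Type*} (G : SimpleGraph V) (o : V) (R : ℕ) : Set V := {v | G.dist o v ≤ R}

lemma mem_gball_self {V : Type*} (G : SimpleGraph V) (o : V) (R : ℕ) : o ∈ gball G o R := by
  simp [gball, SimpleGraph.dist_self]

/-- Vertex boundary `∂B_R` of the ball: vertices of the ball having a neighbour outside. -/
def gsphere {V : Type*} (G : SimpleGraph V) (o : V) (R : ℕ) : Set V :=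
  {v | v ∈ gball G o R ∧ ∃ w, G.Adj v w ∧ w ∉ gball G o R}

/-- Edges of `G` with both endpoints in `B`. -/
def edgesWithin {V : Type*} (G : SimpleGraph V) (B : Set V) : Set (Sym2 V) :=
  {e | e ∈ G.edgeSet ∧ ∀ v ∈ e, v ∈ B}

/-- All pairs of vertices of `S`, used to wire the boundary together. -/
def wirePairs {V : Type*} (S : Set V) : Set (Sym2 V) := {e | ∃ x ∈ S, ∃ y ∈ S, e = s(x, y)}

/-- Number of connected components of the configuration `ω`, seen as a spanning subgraph
of the vertex set `B` (free counting). -/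
def kFreeIn {V : Type*} (B : Set V) (ω : Set (Sym2 V)) : ℕ :=
  Nat.card ((SimpleGraph.fromEdgeSet ω).induce B).ConnectedComponent

/-- Number of connected components of the configuration `ω` on the vertex set `B`, with all
components meeting the boundary set `bd` counted as a single one (wired counting). -/
def kWiredIn {V : Type*} (B bd : Set V) (ω : Set (Sym2 V)) : ℕ :=
  Nat.card ((SimpleGraph.fromEdgeSet (ω ∪ wirePairs bd)).induce B).ConnectedComponent

/-- Random-cluster probability of the event `A`, for configurations `ω ⊆ F`, edge weight `p`,
cluster weight `q`, and cluster counting function `kk`. -/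
def rcProb {V : Type*} (p q : ℝ) (F : Set (Sym2 V)) (kk : Set (Sym2 V) → ℕ)
    (A : Set (Set (Sym2 V))) : ℝ :=
  (∑ᶠ ω ∈ {ω : Set (Sym2 V) | ω ⊆ F ∧ ω ∈ A}, (p / (1 - p)) ^ Nat.card ω * q ^ kk ω) /
  (∑ᶠ ω ∈ {ω : Set (Sym2 V) | ω ⊆ F}, (p / (1 - p)) ^ Nat.card ω * q ^ kk ω)

/-- The event that `x` and `y` are connected by an open path. -/
def connEvent {V : Type*} (x y : V) : Set (Set (Sym2 V)) :=
  {ω | (SimpleGraph.fromEdgeSet ω).Reachable x y}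

/-- The event that `x` is connected to some vertex of `S` by an open path. -/
def connToSet {V : Type*} (x : V) (S : Set V) : Set (Set (Sym2 V)) :=
  {ω | ∃ y ∈ S, (SimpleGraph.fromEdgeSet ω).Reachable x y}

/-- The wired random-cluster measure `φ¹_{B_R,p,q}` in the ball of radius `R`. -/
def wiredBallProb {V : Type*} (G : SimpleGraph V) (o : V) (R : ℕ) (p q : ℝ)
    (A : Set (Set (Sym2 V))) : ℝ :=
  rcProb p q (edgesWithin G (gball G o R)) (kWiredIn (gball G o R) (gsphere G o R)) A

/-- `θ¹(p) = inf_R φ¹_{B_R,p,q}[0 ↔ ∂B_R]`. -/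
def theta1 {V : Type*} (G : SimpleGraph V) (o : V) (p q : ℝ) : ℝ :=
  ⨅ R : ℕ, wiredBallProb G o R p q (connToSet o (gsphere G o R))

/-- `p_c = sup {p ∈ (0,1) : θ¹(p) = 0}`. -/
def pcRC {V : Type*} (G : SimpleGraph V) (o : V) (q : ℝ) : ℝ :=
  sSup {p | p ∈ Set.Ioo (0 : ℝ) 1 ∧ theta1 G o p q = 0}

/-- `σ_x · σ_y` as a function on unordered edges. -/
def pairE {V : Type*} {q : ℕ} (spin : Fin q → EuclideanSpace ℝ (Fin (q - 1)))
    (σ : V → Fin q) : Sym2 V → ℝ :=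
  Sym2.lift ⟨fun x y => ⟪spin (σ x), spin (σ y)⟫_ℝ, fun _ _ => real_inner_comm _ _⟩

/-- Expectation of the observable `X` for the Potts model with edge set `F`, inverse
temperature `β` and allowed configuration set `C`. -/
def pottsExp {V : Type*} {q : ℕ} (spin : Fin q → EuclideanSpace ℝ (Fin (q - 1)))
    (F : Set (Sym2 V)) (β : ℝ) (C : Set (V → Fin q)) (X : (V → Fin q) → ℝ) : ℝ :=
  (∑ᶠ σ ∈ C, X σ * Real.exp (β * ∑ᶠ e ∈ F, pairE spin σ e)) /
  (∑ᶠ σ ∈ C, Real.exp (β * ∑ᶠ e ∈ F, pairE spin σ e))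

/-- The magnetization `m(β) = inf_R ⟨σ_0 · b⟩^b_{B_R,β,q}`, where the Potts model in `B_R` has
monochromatic boundary condition `b` on `∂B_R`. -/
def pottsMag {V : Type*} {q : ℕ} (G : SimpleGraph V) (o : V)
    (spin : Fin q → EuclideanSpace ℝ (Fin (q - 1))) (b : Fin q) (β : ℝ) : ℝ :=
  ⨅ R : ℕ, pottsExp spin (edgesWithin G (gball G o R)) β
    {σ | ∀ x, x ∉ gball G o R \ gsphere G o R → σ x = b}
    (fun σ => ⟪spin (σ o), spin b⟫_ℝ)

/-- The critical inverse temperature `β_c = sup {β > 0 : m(β) = 0}`. -/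
def betac {V : Type*} {q : ℕ} (G : SimpleGraph V) (o : V)
    (spin : Fin q → EuclideanSpace ℝ (Fin (q - 1))) (b : Fin q) : ℝ :=
  sSup {β | 0 < β ∧ pottsMag G o spin b β = 0}

/-- The dual-torus wave-vector coordinate `k = π m / N ∈ [0, 2π)` attached to `m ∈ ℤ/2Nℤ`. -/
def kvec (N : ℕ) (m : ZMod (2 * N)) : ℝ := Real.pi * m.val / N

/-- `φ(k) = (1/d) Σ_j cos k_j` for the wave vector indexed by `m`, with `d = r + s`. -/
def torusPhi (r s N n : ℕ) (m : TorusV r s N n) : ℝ :=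
  (1 / (r + s : ℝ)) * ((∑ j, Real.cos (kvec N (m.1 j))) + ∑ j, Real.cos (kvec n (m.2 j)))

/-- `k · z` for the wave vector indexed by `m` and the torus point `z`. -/
def torusDot (r s N n : ℕ) (m z : TorusV r s N n) : ℝ :=
  (∑ j, kvec N (m.1 j) * ((z.1 j).val : ℝ)) + ∑ j, kvec n (m.2 j) * ((z.2 j).val : ℝ)

/-- The torus Green function
`G_{N,n}(x,y) = (1/|T|) Σ_{k ∈ T* \ {0}} cos(k·(x-y)) / (1 - φ(k))`. -/
def torusGreen (r s N n : ℕ) (x y : TorusV r s N n) : ℝ :=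
  (1 / (Nat.card (TorusV r s N n) : ℝ)) *
    ∑ᶠ m ∈ {m : TorusV r s N n | m ≠ 0},
      Real.cos (torusDot r s N n m (x - y)) / (1 - torusPhi r s N n m)

/-- The two-point function `⟨σ_x · σ_y⟩` of the Potts model on the torus. -/
def torusCorr (r s N n : ℕ) {q : ℕ} (spin : Fin q → EuclideanSpace ℝ (Fin (q - 1)))
    (β : ℝ) (x y : TorusV r s N n) : ℝ :=
  pottsExp spin (torusGraph r s N n).edgeSet β Set.univ
    (fun σ => ⟪spin (σ x), spin (σ y)⟫_ℝ)

/-- The box `[-π, π]^r`. -/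
def boxSet (r : ℕ) : Set (Fin r → ℝ) := Set.univ.pi fun _ => Set.Icc (-Real.pi) Real.pi

/-- `φ(k, l) = (1/d) (Σ_j cos k_j + Σ_j cos l_j)` with `d = r + s`. -/
def slabPhi (r s : ℕ) (k : Fin r → ℝ) (l : Fin s → ℝ) : ℝ :=
  (1 / (r + s : ℝ)) * ((∑ j, Real.cos (k j)) + ∑ j, Real.cos (l j))

/-- The slab Green function `G_{∞,n}(x,y)`, for `x, y ∈ ℤ^r × (ℤ/2nℤ)^s`. -/
def slabGreen (r s n : ℕ) (x y : SlabV r s n) : ℝ :=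
  (1 / (2 * n : ℝ) ^ s) * ∑ᶠ l : Fin s → ZMod (2 * n),
    (1 / (2 * Real.pi) ^ r) *
      ∫ k in boxSet r,
        Real.cos ((∑ j, k j * ((x.1 j - y.1 j : ℤ) : ℝ)) +
          ∑ j, kvec n (l j) * (((x.2 j - y.2 j : ZMod (2 * n))).val : ℝ)) /
        (1 - slabPhi r s k fun j => kvec n (l j))

/-- The natural projection from the slab `ℤ^r × (ℤ/2nℤ)^s` to the torus
`(ℤ/2Nℤ)^r × (ℤ/2nℤ)^s`. -/
def slabToTorus (r s N n : ℕ) (x : SlabV r s n) : TorusV r s N n :=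
  (fun j => ((x.1 j : ℤ) : ZMod (2 * N)), x.2)

/-- The Green function of simple random walk on `ℤ^d`,
`G(z) = (2π)^{-d} ∫_{[-π,π]^d} cos(k·z) / (1 - φ(k)) dk`. -/
def greenZd (d : ℕ) (z : Fin d → ℤ) : ℝ :=
  (1 / (2 * Real.pi) ^ d) *
    ∫ k in boxSet d,
      Real.cos (∑ j, k j * (z j : ℝ)) / (1 - (1 / (d : ℝ)) * ∑ j, Real.cos (k j))

/-- The natural projection `ℤ^d → ℤ^r × (ℤ/2nℤ)^{d-r}`. -/
def splitProj (d r n : ℕ) (h : r ≤ d) (x : Fin d → ℤ) : SlabV r (d - r) n :=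
  (fun j => x (Fin.castLE h j),
   fun j => ((x (Fin.cast (by omega) (Fin.natAdd r j)) : ℤ) : ZMod (2 * n)))


section EdwardsSokalAux

variable {V : Type*}

/-- Compatibility of a spin configuration with an edge configuration. -/
def pottsCompat {q : ℕ} (ω : Set (Sym2 V)) (σ : V → Fin q) : Prop :=
  ∀ ⦃v w : V⦄, s(v, w) ∈ ω → σ v = σ w

lemma pottsCompat.eq_of_reachable {q : ℕ} {ω : Set (Sym2 V)} {σ : V → Fin q}
    (h : pottsCompat ω σ) {v w : V} (hr : (SimpleGraph.fromEdgeSet ω).Reachable v w) :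
    σ v = σ w := by
  obtain ⟨p⟩ := hr
  induction p with
  | nil => rfl
  | cons a _ ih =>
    rw [SimpleGraph.fromEdgeSet_adj] at a
    exact (h a.1).trans ih

/-- Compatible spin configurations correspond to colourings of the clusters. -/
def compatEquiv {q : ℕ} (ω : Set (Sym2 V)) :
    {σ : V → Fin q // pottsCompat ω σ} ≃
      ((SimpleGraph.fromEdgeSet ω).ConnectedComponent → Fin q) where
  toFun σ := SimpleGraph.ConnectedComponent.lift σ.1 fun v w p _ => σ.2.eq_of_reachable ⟨p⟩
  invFun c := ⟨fun v => c ((SimpleGraph.fromEdgeSet ω).connectedComponentMk v), by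
    intro v w h
    by_cases hvw : v = w
    · rw [hvw]
    · exact congrArg c (SimpleGraph.ConnectedComponent.sound
        (SimpleGraph.Adj.reachable ((SimpleGraph.fromEdgeSet_adj ω).2 ⟨h, hvw⟩)))⟩
  left_inv σ := Subtype.ext rfl
  right_inv c := by
    ext t
    refine SimpleGraph.ConnectedComponent.ind (fun v => ?_) t
    rfl

lemma sum_inner_spin {q : ℕ} (hq : 2 ≤ q)
    (spin : Fin q → EuclideanSpace ℝ (Fin (q - 1)))
    (hunit : ∀ i, ⟪spin i, spin i⟫_ℝ = 1)
    (hangle : ∀ i j, i ≠ j → ⟪spin i, spin j⟫_ℝ = -(1 / ((q : ℝ) - 1)))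
    (a : Fin q) : ∑ v : Fin q, ⟪spin a, spin v⟫_ℝ = 0 := by
  have hq1 : (1:ℝ) < (q:ℝ) := by exact_mod_cast hq.trans_lt' one_lt_two
  rw [← Finset.add_sum_erase _ _ (Finset.mem_univ a), hunit a,
    Finset.sum_congr rfl (fun v hv => hangle a v (by
      simp only [Finset.mem_erase, Finset.mem_univ, and_true] at hv
      exact fun h => hv (h ▸ rfl)))]
  rw [Finset.sum_const, Finset.card_erase_of_mem (Finset.mem_univ a), Finset.card_univ,
    Fintype.card_fin]
  have hc : ((q - 1 : ℕ) : ℝ) = (q : ℝ) - 1 := by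
    have : 1 ≤ q := by omega
    push_cast [this]; ring
  rw [nsmul_eq_mul, hc]
  have h : (q:ℝ) - 1 ≠ 0 := sub_ne_zero.mpr (ne_of_gt hq1)
  field_simp
  ring

/-- The key cluster-counting identity. -/
lemma sum_compat_inner [Fintype V] [DecidableEq V] {q : ℕ} (hq : 2 ≤ q)
    (spin : Fin q → EuclideanSpace ℝ (Fin (q - 1)))
    (hunit : ∀ i, ⟪spin i, spin i⟫_ℝ = 1)
    (hangle : ∀ i j, i ≠ j → ⟪spin i, spin j⟫_ℝ = -(1 / ((q : ℝ) - 1)))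
    (ω : Set (Sym2 V)) (x y : V) [DecidablePred (pottsCompat (q := q) ω)]
    [Decidable ((SimpleGraph.fromEdgeSet ω).Reachable x y)] :
    ∑ σ : V → Fin q, (if pottsCompat ω σ then ⟪spin (σ x), spin (σ y)⟫_ℝ else 0) =
      (if (SimpleGraph.fromEdgeSet ω).Reachable x y then 1 else 0) *
        (q : ℝ) ^ Nat.card (SimpleGraph.fromEdgeSet ω).ConnectedComponent := by
  classical
  set H := SimpleGraph.fromEdgeSet ω with hH
  haveI : Fintype H.ConnectedComponent := Fintype.ofFinite _
  have h1 : ∑ σ : V → Fin q, (if pottsCompat ω σ then ⟪spin (σ x), spin (σ y)⟫_ℝ else 0)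
      = ∑ σ : {σ : V → Fin q // pottsCompat ω σ}, ⟪spin (σ.1 x), spin (σ.1 y)⟫_ℝ := by
    rw [← Finset.sum_filter]
    exact Finset.sum_subtype _ (by simp) _
  rw [h1, ← Equiv.sum_comp (compatEquiv (q := q) ω).symm
    (fun σ => ⟪spin (σ.1 x), spin (σ.1 y)⟫_ℝ)]
  have h2 : ∀ c : H.ConnectedComponent → Fin q,
      ((compatEquiv (q := q) ω).symm c).1 = fun v => c (H.connectedComponentMk v) := fun c => rfl
  simp only [h2]
  by_cases hxy : H.Reachable x y
  · have hcc : H.connectedComponentMk x = H.connectedComponentMk y :=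
      SimpleGraph.ConnectedComponent.sound hxy
    rw [if_pos hxy, one_mul]
    calc ∑ c : H.ConnectedComponent → Fin q,
          ⟪spin (c (H.connectedComponentMk x)), spin (c (H.connectedComponentMk y))⟫_ℝ
        = ∑ _c : H.ConnectedComponent → Fin q, (1 : ℝ) := by
          refine Finset.sum_congr rfl fun c _ => ?_
          rw [hcc, hunit]
      _ = (q : ℝ) ^ Nat.card H.ConnectedComponent := by
          rw [Finset.sum_const, Finset.card_univ, Fintype.card_fun, Fintype.card_fin,
            nsmul_eq_mul, mul_one, Nat.card_eq_fintype_card]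
          push_cast
          rfl
  · rw [if_neg hxy, zero_mul]
    set Cx := H.connectedComponentMk x
    set Cy := H.connectedComponentMk y
    have hne : Cx ≠ Cy := fun h => hxy (SimpleGraph.ConnectedComponent.exact h)
    rw [← Equiv.sum_comp (Equiv.funSplitAt Cy (Fin q)).symm
      (fun c => ⟪spin (c Cx), spin (c Cy)⟫_ℝ)]
    have h3 : ∀ p : Fin q × ({j // j ≠ Cy} → Fin q),
        ((Equiv.funSplitAt Cy (Fin q)).symm p) Cx = p.2 ⟨Cx, hne⟩ := by
      intro p
      rw [Equiv.funSplitAt_symm_apply, dif_neg hne]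
    have h4 : ∀ p : Fin q × ({j // j ≠ Cy} → Fin q),
        ((Equiv.funSplitAt Cy (Fin q)).symm p) Cy = p.1 := by
      intro p
      rw [Equiv.funSplitAt_symm_apply, dif_pos rfl]
    simp only [h3, h4]
    rw [Fintype.sum_prod_type, Finset.sum_comm]
    refine Finset.sum_eq_zero fun rest _ => ?_
    exact sum_inner_spin hq spin hunit hangle _

/-- indicator that the two endpoint spins agree -/
def eqInd {q : ℕ} (σ : V → Fin q) : Sym2 V → ℝ :=
  Sym2.lift ⟨fun v w => if σ v = σ w then 1 else 0, fun v w => by simp [eq_comm]⟩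

lemma eqInd_mk {q : ℕ} (σ : V → Fin q) (v w : V) :
    eqInd σ s(v, w) = if σ v = σ w then 1 else 0 := rfl

lemma pairE_mk {q : ℕ} (spin : Fin q → EuclideanSpace ℝ (Fin (q - 1)))
    (σ : V → Fin q) (v w : V) :
    pairE spin σ s(v, w) = ⟪spin (σ v), spin (σ w)⟫_ℝ := rfl

lemma prod_eqInd {q : ℕ} (t : Finset (Sym2 V)) (σ : V → Fin q)
    [Decidable (pottsCompat (↑t : Set (Sym2 V)) σ)] :
    ∏ e ∈ t, eqInd σ e = if pottsCompat (↑t : Set (Sym2 V)) σ then 1 else 0 := by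
  by_cases h : pottsCompat (↑t : Set (Sym2 V)) σ
  · rw [if_pos h]
    refine Finset.prod_eq_one fun e he => ?_
    induction e with
    | h v w => simp [eqInd, h (Finset.mem_coe.2 he)]
  · rw [if_neg h]
    rw [show ¬ pottsCompat (↑t : Set (Sym2 V)) σ ↔
        ∃ v w, s(v, w) ∈ t ∧ σ v ≠ σ w by
      constructor
      · intro hn
        by_contra hc
        push_neg at hc
        exact hn fun v w hm => hc v w hm
      · rintro ⟨v, w, hm, hne⟩ hc
        exact hne (hc hm)] at h
    obtain ⟨v, w, hm, hne⟩ := h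
    refine Finset.prod_eq_zero hm ?_
    simp [eqInd, hne]

lemma exp_pairE {q : ℕ} (hq : 2 ≤ q)
    (spin : Fin q → EuclideanSpace ℝ (Fin (q - 1)))
    (hunit : ∀ i, ⟪spin i, spin i⟫_ℝ = 1)
    (hangle : ∀ i j, i ≠ j → ⟪spin i, spin j⟫_ℝ = -(1 / ((q : ℝ) - 1)))
    (β : ℝ) (σ : V → Fin q) (e : Sym2 V) :
    Real.exp (β * pairE spin σ e) =
      Real.exp (-β / ((q : ℝ) - 1)) *
        ((Real.exp ((q * β) / ((q : ℝ) - 1)) - 1) * eqInd σ e + 1) := by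
  have hq1 : (1:ℝ) < (q:ℝ) := by exact_mod_cast hq.trans_lt' one_lt_two
  have hne : (q:ℝ) - 1 ≠ 0 := sub_ne_zero.mpr (ne_of_gt hq1)
  induction e with
  | h v w =>
    rw [pairE_mk, eqInd_mk]
    by_cases h : σ v = σ w
    · rw [if_pos h, h, hunit, mul_one, mul_one, sub_add_cancel, ← Real.exp_add]
      congr 1
      field_simp
      ring
    · rw [if_neg h, hangle _ _ h, mul_zero, zero_add, mul_one]
      congr 1
      field_simp

lemma exp_expand {q : ℕ} (hq : 2 ≤ q)
    (spin : Fin q → EuclideanSpace ℝ (Fin (q - 1)))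
    (hunit : ∀ i, ⟪spin i, spin i⟫_ℝ = 1)
    (hangle : ∀ i j, i ≠ j → ⟪spin i, spin j⟫_ℝ = -(1 / ((q : ℝ) - 1)))
    (β : ℝ) (Et : Finset (Sym2 V)) (σ : V → Fin q) :
    Real.exp (β * ∑ e ∈ Et, pairE spin σ e) =
      Real.exp (-β / ((q : ℝ) - 1)) ^ Et.card *
        ∑ t ∈ Et.powerset,
          (Real.exp ((q * β) / ((q : ℝ) - 1)) - 1) ^ t.card * ∏ e ∈ t, eqInd σ e := by
  classical
  rw [Finset.mul_sum, Real.exp_sum,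
    Finset.prod_congr rfl fun e _ => exp_pairE hq spin hunit hangle β σ e,
    Finset.prod_mul_distrib, Finset.prod_const]
  congr 1
  rw [Finset.prod_add]
  refine Finset.sum_congr rfl fun t _ => ?_
  rw [Finset.prod_const_one, mul_one, Finset.prod_mul_distrib, Finset.prod_const]

lemma finsum_mem_subsets [Finite V] (F : Finset (Sym2 V)) (P : Set (Sym2 V) → Prop)
    [DecidablePred fun t : Finset (Sym2 V) => P ↑t] (g : Set (Sym2 V) → ℝ) :
    ∑ᶠ ω ∈ {ω : Set (Sym2 V) | ω ⊆ ↑F ∧ P ω}, g ω =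
      ∑ t ∈ F.powerset.filter (fun t : Finset (Sym2 V) => P ↑t), g ↑t := by
  classical
  have hset : {ω : Set (Sym2 V) | ω ⊆ ↑F ∧ P ω} =
      ↑((F.powerset.filter (fun t : Finset (Sym2 V) => P ↑t)).image
        (fun t : Finset (Sym2 V) => (↑t : Set (Sym2 V)))) := by
    ext ω
    simp only [Set.mem_setOf_eq, Finset.coe_image, Set.mem_image, Finset.mem_coe,
      Finset.mem_filter, Finset.mem_powerset]
    constructor
    · rintro ⟨hsub, hP⟩
      haveI : Fintype ω := Fintype.ofFinite _
      refine ⟨ω.toFinset, ⟨⟨?_, ?_⟩, Set.coe_toFinset ω⟩⟩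
      · intro e he
        rw [Set.mem_toFinset] at he
        exact Finset.mem_coe.1 (hsub he)
      · rw [Set.coe_toFinset]; exact hP
    · rintro ⟨t, ⟨hsub, hP⟩, rfl⟩
      exact ⟨fun e he => Finset.mem_coe.2 (hsub (Finset.mem_coe.1 he)), hP⟩
  rw [hset, finsum_mem_coe_finset, Finset.sum_image]
  intro a _ b _ h
  exact Finset.coe_injective h

lemma kFreeIn_univ' (ω : Set (Sym2 V)) :
    kFreeIn (Set.univ : Set V) ω =
      Nat.card (SimpleGraph.fromEdgeSet ω).ConnectedComponent :=
  Nat.card_congr (SimpleGraph.Iso.connectedComponentEquiv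
    (SimpleGraph.induceUnivIso (SimpleGraph.fromEdgeSet ω)))

lemma potts_sum_expand0 [Fintype V] [DecidableEq V] {q' : ℕ} (m : ℕ) (Cc : ℝ)
    (f : (V → Fin q') → ℝ)
    (S : Finset (Finset (Sym2 V))) (r : ℝ) (h : Finset (Sym2 V) → (V → Fin q') → ℝ) :
    ∑ σ : V → Fin q', f σ * (Cc ^ m * ∑ t ∈ S, r ^ t.card * h t σ) =
      Cc ^ m * ∑ t ∈ S, r ^ t.card * ∑ σ : V → Fin q', f σ * h t σ := by
  rw [Finset.mul_sum]
  simp only [Finset.mul_sum]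
  rw [Finset.sum_comm]
  refine Finset.sum_congr rfl fun t _ => Finset.sum_congr rfl fun σ _ => by ring

lemma potts_sum_expand1 [Fintype V] [DecidableEq V] {q' : ℕ} (m : ℕ) (Cc : ℝ)
    (S : Finset (Finset (Sym2 V))) (r : ℝ) (h : Finset (Sym2 V) → (V → Fin q') → ℝ) :
    ∑ σ : V → Fin q', (Cc ^ m * ∑ t ∈ S, r ^ t.card * h t σ) =
      Cc ^ m * ∑ t ∈ S, r ^ t.card * ∑ σ : V → Fin q', h t σ := by
  rw [← Finset.mul_sum]
  congr 1
  rw [Finset.sum_comm]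
  refine Finset.sum_congr rfl fun t _ => ?_
  rw [Finset.mul_sum]

end EdwardsSokalAux

theorem stmt13 {V : Type*} [Finite V] (G : SimpleGraph V) (q : ℕ) (hq : 2 ≤ q)
    (β p : ℝ) (hβ : 0 < β) (hp : p = 1 - Real.exp (-(q * β) / ((q : ℝ) - 1)))
    (spin : Fin q → EuclideanSpace ℝ (Fin (q - 1)))
    (hunit : ∀ i, ⟪spin i, spin i⟫_ℝ = 1)
    (hangle : ∀ i j, i ≠ j → ⟪spin i, spin j⟫_ℝ = -(1 / ((q : ℝ) - 1)))
    (x y : V) :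
    pottsExp spin G.edgeSet β Set.univ (fun σ => ⟪spin (σ x), spin (σ y)⟫_ℝ) =
      rcProb p (q : ℝ) G.edgeSet (kFreeIn Set.univ) (connEvent x y) := by
  classical
  haveI : Fintype V := Fintype.ofFinite V
  haveI : Fintype ↥G.edgeSet := Fintype.ofFinite _
  have hq1 : (1:ℝ) < (q:ℝ) := by exact_mod_cast hq.trans_lt' one_lt_two
  have hne1 : (q:ℝ) - 1 ≠ 0 := sub_ne_zero.mpr (ne_of_gt hq1)
  have hr : p / (1 - p) = Real.exp ((q * β) / ((q:ℝ) - 1)) - 1 := by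
    rw [hp]
    rw [show (1:ℝ) - (1 - Real.exp (-((q:ℝ) * β) / ((q:ℝ) - 1))) =
      Real.exp (-((q:ℝ) * β) / ((q:ℝ) - 1)) from by ring]
    rw [div_eq_iff (Real.exp_ne_zero _), sub_mul, ← Real.exp_add, one_mul]
    rw [show ((q:ℝ) * β) / ((q:ℝ) - 1) + -((q:ℝ) * β) / ((q:ℝ) - 1) = 0 from by ring,
      Real.exp_zero]
  set Cc : ℝ := Real.exp (-β / ((q:ℝ) - 1)) with hCc
  set r : ℝ := Real.exp ((q * β) / ((q:ℝ) - 1)) - 1 with hrdef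
  set m : ℕ := G.edgeFinset.card with hm
  have hedge : ∀ σ : V → Fin q,
      (∑ᶠ e ∈ G.edgeSet, pairE spin σ e) = ∑ e ∈ G.edgeFinset, pairE spin σ e := by
    intro σ
    rw [← SimpleGraph.coe_edgeFinset, finsum_mem_coe_finset]
  have hnum : (∑ᶠ σ ∈ (Set.univ : Set (V → Fin q)),
        (⟪spin (σ x), spin (σ y)⟫_ℝ) * Real.exp (β * ∑ᶠ e ∈ G.edgeSet, pairE spin σ e)) =
      Cc ^ m * ∑ t ∈ G.edgeFinset.powerset, r ^ t.card *
        ((if (SimpleGraph.fromEdgeSet (↑t : Set (Sym2 V))).Reachable x y then 1 else 0) *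
          (q : ℝ) ^ Nat.card (SimpleGraph.fromEdgeSet (↑t : Set (Sym2 V))).ConnectedComponent) := by
    rw [finsum_mem_univ, finsum_eq_sum_of_fintype]
    simp only [hedge, exp_expand hq spin hunit hangle β G.edgeFinset]
    rw [potts_sum_expand0]
    refine congrArg _ (Finset.sum_congr rfl fun t _ => congrArg _ ?_)
    simp only [prod_eqInd, mul_ite, mul_one, mul_zero]
    exact sum_compat_inner hq spin hunit hangle _ x y
  have hden : (∑ᶠ σ ∈ (Set.univ : Set (V → Fin q)),
        Real.exp (β * ∑ᶠ e ∈ G.edgeSet, pairE spin σ e)) =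
      Cc ^ m * ∑ t ∈ G.edgeFinset.powerset, r ^ t.card *
        (q : ℝ) ^ Nat.card (SimpleGraph.fromEdgeSet (↑t : Set (Sym2 V))).ConnectedComponent := by
    rw [finsum_mem_univ, finsum_eq_sum_of_fintype]
    simp only [hedge, exp_expand hq spin hunit hangle β G.edgeFinset]
    rw [potts_sum_expand1]
    refine congrArg _ (Finset.sum_congr rfl fun t _ => congrArg _ ?_)
    simp only [prod_eqInd]
    have hxx := sum_compat_inner (V := V) hq spin hunit hangle (↑t : Set (Sym2 V)) x x
    simp only [hunit] at hxx
    rw [hxx, if_pos (SimpleGraph.Reachable.refl x), one_mul]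
  have hrcnum : (∑ᶠ ω ∈ {ω : Set (Sym2 V) | ω ⊆ G.edgeSet ∧ ω ∈ connEvent x y},
        (p / (1 - p)) ^ Nat.card ω * (q : ℝ) ^ kFreeIn (Set.univ : Set V) ω) =
      ∑ t ∈ G.edgeFinset.powerset, r ^ t.card *
        ((if (SimpleGraph.fromEdgeSet (↑t : Set (Sym2 V))).Reachable x y then 1 else 0) *
          (q : ℝ) ^ Nat.card (SimpleGraph.fromEdgeSet (↑t : Set (Sym2 V))).ConnectedComponent) := by
    rw [show G.edgeSet = ↑G.edgeFinset from (SimpleGraph.coe_edgeFinset G).symm]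
    rw [finsum_mem_subsets G.edgeFinset (· ∈ connEvent x y)]
    rw [Finset.sum_filter]
    refine Finset.sum_congr rfl fun t _ => ?_
    rw [Nat.card_coe_set_eq, Set.ncard_coe_finset, kFreeIn_univ', hr]
    by_cases hconn : (SimpleGraph.fromEdgeSet (↑t : Set (Sym2 V))).Reachable x y
    · rw [if_pos (show (↑t : Set (Sym2 V)) ∈ connEvent x y from hconn), if_pos hconn, one_mul]
    · rw [if_neg (show (↑t : Set (Sym2 V)) ∉ connEvent x y from hconn), if_neg hconn,
        zero_mul, mul_zero]
  have hrcden : (∑ᶠ ω ∈ {ω : Set (Sym2 V) | ω ⊆ G.edgeSet},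
        (p / (1 - p)) ^ Nat.card ω * (q : ℝ) ^ kFreeIn (Set.univ : Set V) ω) =
      ∑ t ∈ G.edgeFinset.powerset, r ^ t.card *
        (q : ℝ) ^ Nat.card (SimpleGraph.fromEdgeSet (↑t : Set (Sym2 V))).ConnectedComponent := by
    rw [show G.edgeSet = ↑G.edgeFinset from (SimpleGraph.coe_edgeFinset G).symm]
    rw [show {ω : Set (Sym2 V) | ω ⊆ ↑G.edgeFinset} =
      {ω : Set (Sym2 V) | ω ⊆ ↑G.edgeFinset ∧ (fun _ => True) ω} from by simp]
    rw [finsum_mem_subsets G.edgeFinset (fun _ => True), Finset.filter_true]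
    refine Finset.sum_congr rfl fun t _ => ?_
    rw [Nat.card_coe_set_eq, Set.ncard_coe_finset, kFreeIn_univ', hr]
  rw [pottsExp, rcProb, hnum, hden, hrcnum, hrcden,
    mul_div_mul_left _ _ (pow_ne_zero m (Real.exp_ne_zero _))]

end
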